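/- arXiv:1502.03317 — 2 statements merged into one kernel-verified Lean document; each statement's English description precedes it below -/
import Mathlib

section
/- Let d, m ≥ 1, let φ be a real-valued Schwartz function on ℝ^d, and let f₁, …, f_m, g be Schwartz functions on ℝ^d. Define the Rihaczek transform R(f₁,…,f_m; g)(x, ξ₁,…,ξ_m) = e^{2πi x·(ξ₁+⋯+ξ_m)} f̂₁(ξ₁)⋯f̂_m(ξ_m) conj(g(x)). Then for all x, ν ∈ ℝ^d and t = (t₁,…,t_m), ξ = (ξ₁,…,ξ_m) ∈ (ℝ^d)^m: |∫_{(ℝ^d)^m} ∫_{ℝ^d} e^{−2πi (x̃·ν + Σ_{i=1}^m t_i·ξ̃_i)} conj(R(f₁,…,f_m; g)(x̃, ξ̃)) · R(φ,…,φ; φ)(x̃ − x, ξ̃ − ξ) dx̃ dξ̃| = (∏_{i=1}^m |V_φ f_i(x + t_i, ξ_i)|) · |V_φ g(x, ν + Σ_{i=1}^m ξ_i)|. -/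
open MeasureTheory Complex
open scoped ENNReal NNReal RealInnerProductSpace

noncomputable section

abbrev Ed (d : ℕ) := EuclideanSpace ℝ (Fin d)

/-- `e2pi a = e^{2πi a}`. -/
def e2pi (a : ℝ) : ℂ := Complex.exp (2 * Real.pi * Complex.I * (a : ℂ))

/-- Short-time Fourier transform `V_φ f (t, ν)`. -/
def STFT (d : ℕ) (φ f : Ed d → ℂ) (t ν : Ed d) : ℂ :=
  ∫ y, f y * e2pi (-⟪y, ν⟫) * φ (y - t)

/-- The Gaussian window `e^{-‖x‖²}` as a complex-valued function. -/
def gauss (d : ℕ) : Ed d → ℂ := fun x => (Real.exp (-‖x‖ ^ 2) : ℝ)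

/-- `L^p`-type norm (`ℝ≥0∞`-valued) with essential supremum in case `p = ∞`. -/
def eNorm {α : Type*} [MeasurableSpace α] (μ : Measure α) (p : ℝ≥0∞) (F : α → ℝ≥0∞) : ℝ≥0∞ :=
  if p = ∞ then essSup F μ else (∫⁻ a, F a ^ p.toReal ∂μ) ^ (1 / p.toReal)

/-- Modulation space norm `‖f‖_{M^{p,q}}` with the Gaussian window. -/
def modNorm (d : ℕ) (p q : ℝ≥0∞) (f : Ed d → ℂ) : ℝ≥0∞ :=
  eNorm volume q fun ν => eNorm volume p fun t => (‖STFT d (gauss d) f t ν‖₊ : ℝ≥0∞)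

/-- The Gaussian window on `ℝ^{3d}`. -/
def gauss3 (d : ℕ) : Ed d × Ed d × Ed d → ℂ :=
  fun X => (Real.exp (-‖X.1‖ ^ 2 - ‖X.2.1‖ ^ 2 - ‖X.2.2‖ ^ 2) : ℝ)

/-- Symbol short-time Fourier transform of a symbol on `ℝ^{3d}`. -/
def symbSTFT (d : ℕ) (Φ σ : Ed d × Ed d × Ed d → ℂ) (x t₁ t₂ ξ₁ ξ₂ ν : Ed d) : ℂ :=
  ∫ X : Ed d × Ed d × Ed d,
    σ X * Φ (X.1 - x, X.2.1 - ξ₁, X.2.2 - ξ₂) *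
      e2pi (-(⟪X.1, ν⟫ - ⟪t₁, X.2.1⟫ - ⟪t₂, X.2.2⟫))

/-- Fourier transform. -/
def FT (d : ℕ) (f : Ed d → ℂ) (ξ : Ed d) : ℂ := ∫ y, f y * e2pi (-⟪y, ξ⟫)

/-- Bilinear pseudodifferential operator `T_σ`. -/
def biOp (d : ℕ) (σ : Ed d × Ed d × Ed d → ℂ) (f₁ f₂ : Ed d → ℂ) (x : Ed d) : ℂ :=
  ∫ ξ : Ed d × Ed d,
    e2pi ⟪x, ξ.1 + ξ.2⟫ * σ (x, ξ.1, ξ.2) * FT d f₁ ξ.1 * FT d f₂ ξ.2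


/-- The Rihaczek transform `R(f₁,…,f_m; g)(x, ξ₁,…,ξ_m)`. -/
def rihaczek (d m : ℕ) (f : Fin m → Ed d → ℂ) (g : Ed d → ℂ)
    (x : Ed d) (ξ : Fin m → Ed d) : ℂ :=
  e2pi ⟪x, ∑ i, ξ i⟫ * (∏ i, FT d (f i) (ξ i)) * (starRingEnd ℂ) (g x)

/-!
The phases in the integrand combine so that it factors into a function of `x̃` times a product of
functions of the single `ξ̃ᵢ`. The `x̃`-integral is `V_φ g`, and each `ξ̃ᵢ`-integral is
`∫ conj (f̂ᵢ) · (T_{x+tᵢ} M_{ξᵢ} φ)^`, which Parseval's identity turns into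
`conj (V_φ fᵢ (x + tᵢ, ξᵢ))` up to a unimodular factor.
-/

open FourierTransform

lemma e2pi_add (a b : ℝ) : e2pi (a + b) = e2pi a * e2pi b := by
  rw [e2pi, e2pi, e2pi, ← Complex.exp_add]
  push_cast
  ring_nf

lemma e2pi_sum {ι : Type*} (s : Finset ι) (a : ι → ℝ) :
    e2pi (∑ i ∈ s, a i) = ∏ i ∈ s, e2pi (a i) := by
  simp only [e2pi, ← Complex.exp_sum, Complex.ofReal_sum, Finset.mul_sum]

lemma conj_e2pi (a : ℝ) : (starRingEnd ℂ) (e2pi a) = e2pi (-a) := by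
  rw [e2pi, e2pi, ← Complex.exp_conj]
  simp only [map_mul, Complex.conj_I, Complex.conj_ofReal, map_ofNat, Complex.ofReal_neg]
  ring_nf

lemma norm_e2pi (a : ℝ) : ‖e2pi a‖ = 1 := by
  rw [e2pi, Complex.norm_exp]
  simp

section Fourier

variable {V : Type*} [NormedAddCommGroup V] [InnerProductSpace ℝ V] [FiniteDimensional ℝ V]
  [MeasurableSpace V] [BorelSpace V]

lemma fourier_eq_integral_e2pi (h : V → ℂ) (η : V) : 𝓕 h η = ∫ y, h y * e2pi (-⟪y, η⟫) := by
  rw [Real.fourier_eq']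
  congr 1 with y
  rw [smul_eq_mul, mul_comm, e2pi]
  push_cast
  ring_nf

lemma fourier_translate_modulate (φ : V → ℂ) (a ξ₀ η : V) :
    𝓕 (fun y => e2pi ⟪y - a, ξ₀⟫ * φ (y - a)) η = e2pi (-⟪a, η⟫) * 𝓕 φ (η - ξ₀) := by
  simp only [fourier_eq_integral_e2pi, ← integral_const_mul]
  rw [← integral_add_right_eq_self _ a]
  congr 1 with z
  simp only [add_sub_cancel_right]
  have phase : e2pi ⟪z, ξ₀⟫ * e2pi (-⟪z + a, η⟫) = e2pi (-⟪a, η⟫) * e2pi (-⟪z, η - ξ₀⟫) := by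
    rw [← e2pi_add, ← e2pi_add, inner_add_left, inner_sub_right]
    ring_nf
  linear_combination φ z * phase

lemma integral_conj_fourier_mul_fourier (f : SchwartzMap V ℂ) {h : V → ℂ} (hh : Integrable h) :
    ∫ η, (starRingEnd ℂ) (𝓕 f η) * 𝓕 h η = ∫ y, (starRingEnd ℂ) (f y) * h y := by
  -- Self-adjointness with `𝓕 f` as the second factor, so that only `f` needs Fourier inversion.
  have key := VectorFourier.integral_sesq_fourierIntegral_eq_neg_flip (innerSL ℂ (E := ℂ))
    (L := innerₗ V) (μ := volume) (ν := volume) Real.continuous_fourierChar continuous_inner hh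
    (𝓕 f : SchwartzMap V ℂ).integrable
  simp only [coe_innerSL_apply, RCLike.inner_apply, flip_innerₗ] at key
  change ∫ ξ : V, (𝓕 f : SchwartzMap V ℂ) ξ * (starRingEnd ℂ) (𝓕 h ξ) =
    ∫ x : V, 𝓕⁻ ((𝓕 f : SchwartzMap V ℂ) : V → ℂ) x * (starRingEnd ℂ) (h x) at key
  rw [← SchwartzMap.fourierInv_coe, FourierTransform.fourierInv_fourier_eq] at key
  have := congrArg (starRingEnd ℂ) key
  rw [← integral_conj, ← integral_conj] at this
  simpa only [map_mul, Complex.conj_conj, mul_comm] using this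

end Fourier

lemma FT_eq_fourier (d : ℕ) (h : Ed d → ℂ) : FT d h = 𝓕 h :=
  funext fun η => (fourier_eq_integral_e2pi h η).symm

lemma integral_conj_FT_mul_FT_sub_mul_e2pi {d : ℕ} (f : SchwartzMap (Ed d) ℂ) {φ : Ed d → ℂ}
    (hφ : Integrable φ) (a ξ₀ : Ed d) :
    ∫ η, (starRingEnd ℂ) (FT d f η) * FT d φ (η - ξ₀) * e2pi (-⟪a, η⟫) =
      e2pi (-⟪a, ξ₀⟫) * (starRingEnd ℂ) (STFT d (fun y => (starRingEnd ℂ) (φ y)) f a ξ₀) := by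
  have hh : Integrable fun y => e2pi ⟪y - a, ξ₀⟫ * φ (y - a) :=
    (hφ.comp_sub_right a).bdd_mul (c := 1) (by unfold e2pi; fun_prop)
      (.of_forall fun y => (norm_e2pi _).le)
  calc ∫ η, (starRingEnd ℂ) (FT d f η) * FT d φ (η - ξ₀) * e2pi (-⟪a, η⟫)
      = ∫ η, (starRingEnd ℂ) (𝓕 f η) * 𝓕 (fun y => e2pi ⟪y - a, ξ₀⟫ * φ (y - a)) η := by
        simp only [fourier_translate_modulate, FT_eq_fourier, SchwartzMap.fourier_coe]
        congr 1 with η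
        ring
    _ = ∫ y, (starRingEnd ℂ) (f y) * (e2pi ⟪y - a, ξ₀⟫ * φ (y - a)) :=
        integral_conj_fourier_mul_fourier f hh
    _ = e2pi (-⟪a, ξ₀⟫) * (starRingEnd ℂ) (STFT d (fun y => (starRingEnd ℂ) (φ y)) f a ξ₀) := by
        rw [STFT, ← integral_conj, ← integral_const_mul]
        congr 1 with y
        simp only [map_mul, conj_e2pi, Complex.conj_conj, neg_neg]
        have phase : e2pi ⟪y - a, ξ₀⟫ = e2pi (-⟪a, ξ₀⟫) * e2pi ⟪y, ξ₀⟫ := by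
          rw [← e2pi_add, inner_sub_left]
          ring_nf
        rw [phase]
        ring

lemma integral_e2pi_mul_conj_rihaczek_mul_rihaczek {d m : ℕ} (f ψ : Fin m → Ed d → ℂ)
    (g χ : Ed d → ℂ) (x ν : Ed d) (t ξ Ξ : Fin m → Ed d) :
    ∫ X : Ed d, e2pi (-(⟪X, ν⟫ + ∑ i, ⟪t i, Ξ i⟫)) * (starRingEnd ℂ) (rihaczek d m f g X Ξ) *
        rihaczek d m ψ χ (X - x) (fun i => Ξ i - ξ i) =
      (∏ i, (starRingEnd ℂ) (FT d (f i) (Ξ i)) * FT d (ψ i) (Ξ i - ξ i) *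
          e2pi (-⟪x + t i, Ξ i⟫)) *
        (e2pi ⟪x, ∑ i, ξ i⟫ * STFT d (fun y => (starRingEnd ℂ) (χ y)) g x (ν + ∑ i, ξ i)) := by
  have pointwise (X : Ed d) :
      e2pi (-(⟪X, ν⟫ + ∑ i, ⟪t i, Ξ i⟫)) * (starRingEnd ℂ) (rihaczek d m f g X Ξ) *
        rihaczek d m ψ χ (X - x) (fun i => Ξ i - ξ i) =
      ((∏ i, (starRingEnd ℂ) (FT d (f i) (Ξ i)) * FT d (ψ i) (Ξ i - ξ i) *
          e2pi (-⟪x + t i, Ξ i⟫)) * e2pi ⟪x, ∑ i, ξ i⟫) *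
        (g X * e2pi (-⟪X, ν + ∑ i, ξ i⟫) * (starRingEnd ℂ) (χ (X - x))) := by
    have phase : e2pi (-(⟪X, ν⟫ + ∑ i, ⟪t i, Ξ i⟫)) * e2pi (-⟪X, ∑ i, Ξ i⟫) *
        e2pi ⟪X - x, ∑ i, (Ξ i - ξ i)⟫ =
          e2pi (∑ i, -⟪x + t i, Ξ i⟫) * e2pi ⟪x, ∑ i, ξ i⟫ * e2pi (-⟪X, ν + ∑ i, ξ i⟫) := by
      simp only [← e2pi_add, inner_sub_left, inner_sub_right, inner_add_left, inner_add_right,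
        inner_sum, Finset.sum_sub_distrib, Finset.sum_add_distrib, Finset.sum_neg_distrib]
      ring_nf
    simp only [rihaczek, map_mul, map_prod, conj_e2pi, Complex.conj_conj]
    rw [Finset.prod_mul_distrib, Finset.prod_mul_distrib, ← e2pi_sum]
    linear_combination (∏ i, (starRingEnd ℂ) (FT d (f i) (Ξ i))) *
      (∏ i, FT d (ψ i) (Ξ i - ξ i)) * g X * (starRingEnd ℂ) (χ (X - x)) * phase
  simp_rw [pointwise]
  rw [integral_const_mul, STFT]
  ring

theorem stmt3_general (d m : ℕ)
    (φ : SchwartzMap (Ed d) ℝ) (f : Fin m → SchwartzMap (Ed d) ℂ) (g : SchwartzMap (Ed d) ℂ)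
    (x ν : Ed d) (t ξ : Fin m → Ed d) :
    ‖∫ Ξ : Fin m → Ed d, ∫ X : Ed d,
        e2pi (-(⟪X, ν⟫ + ∑ i, ⟪t i, Ξ i⟫)) *
          (starRingEnd ℂ) (rihaczek d m (fun i => ⇑(f i)) (⇑g) X Ξ) *
          rihaczek d m (fun _ => fun y => ((φ y : ℝ) : ℂ)) (fun y => ((φ y : ℝ) : ℂ))
            (X - x) (fun i => Ξ i - ξ i)‖
      = (∏ i, ‖STFT d (fun y => ((φ y : ℝ) : ℂ)) (⇑(f i)) (x + t i) (ξ i)‖) *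
          ‖STFT d (fun y => ((φ y : ℝ) : ℂ)) (⇑g) x (ν + ∑ i, ξ i)‖ := by
  have factor (i : Fin m) := integral_conj_FT_mul_FT_sub_mul_e2pi (f i)
    (φ := fun y => ((φ y : ℝ) : ℂ)) φ.integrable.ofReal (x + t i) (ξ i)
  simp only [Complex.conj_ofReal] at factor
  simp_rw [integral_e2pi_mul_conj_rihaczek_mul_rihaczek, Complex.conj_ofReal]
  rw [integral_mul_const, integral_fintype_prod_volume_eq_prod (f := fun i η =>
    (starRingEnd ℂ) (FT d (f i) η) * FT d (fun y => ((φ y : ℝ) : ℂ)) (η - ξ i) *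
      e2pi (-⟪x + t i, η⟫))]
  simp only [factor, norm_mul, norm_prod, norm_e2pi, RCLike.norm_conj, one_mul]

/-- the absolute value of the symbol STFT of the Rihaczek transform
(with Rihaczek window) factors into a product of short-time Fourier transforms. -/
theorem stmt3 (d m : ℕ) (hd : 1 ≤ d) (hm : 1 ≤ m)
    (φ : SchwartzMap (Ed d) ℝ) (f : Fin m → SchwartzMap (Ed d) ℂ) (g : SchwartzMap (Ed d) ℂ)
    (x ν : Ed d) (t ξ : Fin m → Ed d) :
    ‖∫ Ξ : Fin m → Ed d, ∫ X : Ed d,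
        e2pi (-(⟪X, ν⟫ + ∑ i, ⟪t i, Ξ i⟫)) *
          (starRingEnd ℂ) (rihaczek d m (fun i => ⇑(f i)) (⇑g) X Ξ) *
          rihaczek d m (fun _ => fun y => ((φ y : ℝ) : ℂ)) (fun y => ((φ y : ℝ) : ℂ))
            (X - x) (fun i => Ξ i - ξ i)‖
      = (∏ i, ‖STFT d (fun y => ((φ y : ℝ) : ℂ)) (⇑(f i)) (x + t i) (ξ i)‖) *
          ‖STFT d (fun y => ((φ y : ℝ) : ℂ)) (⇑g) x (ν + ∑ i, ξ i)‖ :=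
  stmt3_general d m φ f g x ν t ξ
end
end

section
/- Let d ≥ 1 and let 1 ≤ q₁, q₂, q₃, s₁, s₂, s₃ ≤ ∞ satisfy: q₁ ≥ s₁, q₂ ≥ s₂, 1/q₂ − 1/s₂ ≥ 1/s₃ − 1/q₁, 0 ≥ 1/s₃ − 1/q₂ (i.e. q₂ ≤ s₃), and (1/q₁ − 1/s₁) + (1/q₂ − 1/s₂) = 1/s₃ − 1/q₃. Then for all f₁ ∈ L^{q₁}(ℝ^d), f₂ ∈ L^{q₂}(ℝ^d), g ∈ L^{q₃}(ℝ^d): (∫_{ℝ^d} (∫_{ℝ^d} (∫_{ℝ^d} |f₁(t₁) f₂(t₂) g(x+t₁+t₂)|^{s₁} dt₁)^{s₂/s₁} dt₂)^{s₃/s₂} dx)^{1/s₃} ≤ ‖f₁‖_{L^{q₁}} ‖f₂‖_{L^{q₂}} ‖g‖_{L^{q₃}}, with essential suprema replacing integrals for infinite exponents. -/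
open MeasureTheory Complex
open scoped ENNReal NNReal RealInnerProductSpace

noncomputable section

/-!
Put `H(u) = ‖t₁ ↦ |f₁(t₁)| |g(u + t₁)|‖_{s₁}`. Pulling `|f₂(t₂)|` out of the innermost norm, the
left-hand side becomes the mixed norm `‖x ↦ ‖t₂ ↦ |f₂(t₂)| H(x + t₂)‖_{s₂}‖_{s₃}`. Both `H` and this
mixed norm are controlled by the mixed-norm Young inequality
`‖x ↦ ‖t ↦ F(t) K(x + t)‖_s‖_r ≤ ‖F‖_q ‖K‖_p` for `s ≤ q, p` and `1/q + 1/p = 1/s + 1/r`,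
which is Young's inequality applied to `F^s` and `K^s`. It is used first for `f₂` and `H`, then for
`f₁` and `g`, with the intermediate exponent `1/r = 1/s₂ + 1/s₃ - 1/q₂`; the hypotheses on the
exponents say exactly that both applications are admissible. Young's inequality itself comes from
Hölder's inequality with three factors and Tonelli's theorem.
-/

section

variable {α : Type*} [MeasurableSpace α] {μ : Measure α}

lemma eNorm_eq_eLpNorm {p : ℝ≥0∞} (hp : p ≠ 0) (F : α → ℝ≥0∞) :
    eNorm μ p F = eLpNorm F p μ := by
  unfold eNorm
  split_ifs with hp_top
  · simp [hp_top, eLpNorm_exponent_top, eLpNormEssSup_eq_essSup_enorm]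
  · simp [eLpNorm_eq_lintegral_rpow_enorm_toReal hp hp_top]

lemma eLpNorm_rpow (F : α → ℝ≥0∞) {S : ℝ} (hS : 0 < S) (p : ℝ≥0∞) :
    eLpNorm (fun a => F a ^ S) p μ = eLpNorm F (p * ENNReal.ofReal S) μ ^ S :=
  eLpNorm_enorm_rpow F hS

lemma eLpNorm_mul_eq_lintegral {F G : α → ℝ≥0∞} {s : ℝ≥0∞} (hs : s ≠ 0) (hs_top : s ≠ ∞) :
    eLpNorm (fun a => F a * G a) s μ =
      (∫⁻ a, F a ^ s.toReal * G a ^ s.toReal ∂μ) ^ s.toReal⁻¹ := by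
  simp [eLpNorm_eq_lintegral_rpow_enorm_toReal hs hs_top,
    ENNReal.mul_rpow_of_nonneg _ _ ENNReal.toReal_nonneg]

lemma eLpNorm_enorm_mul_const_mul {𝕜 : Type*} [NormedField 𝕜] (f g : α → 𝕜) (c : 𝕜) (p : ℝ≥0∞) :
    eLpNorm (fun a => ‖f a * c * g a‖ₑ) p μ = ‖c‖ₑ * eLpNorm (fun a => ‖f a‖ₑ * ‖g a‖ₑ) p μ := by
  have h : (fun a => f a * c * g a) = c • fun a => f a * g a := by
    funext a
    simp only [Pi.smul_apply, smul_eq_mul]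
    ring
  rw [eLpNorm_enorm, h, eLpNorm_const_smul, ← eLpNorm_enorm]
  simp only [enorm_mul]

lemma lintegral_mul_le_eLpNorm_top_mul_eLpNorm_one (F : α → ℝ≥0∞) {G : α → ℝ≥0∞}
    (hG : AEMeasurable G μ) :
    ∫⁻ a, F a * G a ∂μ ≤ eLpNorm F ∞ μ * eLpNorm G 1 μ := by
  simp only [eLpNorm_exponent_top, eLpNormEssSup_eq_essSup_enorm, eLpNorm_one_eq_lintegral_enorm,
    enorm_eq_self]
  rw [← lintegral_const_mul'' _ hG]
  exact lintegral_mono_ae ((ae_le_essSup (f := F)).mono fun a ha => mul_le_mul_left ha _)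

lemma lintegral_mul_le_eLpNorm_mul_eLpNorm {F G : α → ℝ≥0∞} (hF : AEMeasurable F μ)
    (hG : AEMeasurable G μ) {p q : ℝ≥0∞} [hpq : p.HolderConjugate q] :
    ∫⁻ a, F a * G a ∂μ ≤ eLpNorm F p μ * eLpNorm G q μ := by
  have hpq' : p⁻¹ + q⁻¹ = 1 := by simpa using hpq.inv_add_inv_eq_inv
  rcases eq_or_ne p ∞ with rfl | hp
  · obtain rfl : q = 1 := by simpa using hpq'
    exact lintegral_mul_le_eLpNorm_top_mul_eLpNorm_one F hG
  rcases eq_or_ne q ∞ with rfl | hq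
  · obtain rfl : p = 1 := by simpa using hpq'
    simpa only [mul_comm] using lintegral_mul_le_eLpNorm_top_mul_eLpNorm_one G hF
  rw [eLpNorm_eq_lintegral_rpow_enorm_toReal hpq.ne_zero hp,
    eLpNorm_eq_lintegral_rpow_enorm_toReal hpq.symm.ne_zero hq]
  exact ENNReal.lintegral_mul_le_Lp_mul_Lq μ (hpq.toReal_of_ne_top hp hq) hF hG

lemma lintegral_mul_rpow_le {F G : α → ℝ≥0∞} (hF : AEMeasurable F μ) (hG : AEMeasurable G μ)
    {p q r : ℝ} (hp : 1 ≤ p) (hq : 1 ≤ q) (hr : 0 < r) (hpqr : p⁻¹ + q⁻¹ = 1 + r⁻¹) :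
    (∫⁻ a, F a * G a ∂μ) ^ r ≤ (∫⁻ a, F a ^ p * G a ^ q ∂μ) *
      (∫⁻ a, F a ^ p ∂μ) ^ (r / p - 1) * (∫⁻ a, G a ^ q ∂μ) ^ (r / q - 1) := by
  have hp0 : 0 < p := zero_lt_one.trans_le hp
  have hq0 : 0 < q := zero_lt_one.trans_le hq
  have hv : 0 ≤ p⁻¹ - r⁻¹ := by linarith [inv_le_one_of_one_le₀ hq]
  have hw : 0 ≤ q⁻¹ - r⁻¹ := by linarith [inv_le_one_of_one_le₀ hp]
  -- the Hölder exponents `r⁻¹`, `p⁻¹ - r⁻¹`, `q⁻¹ - r⁻¹` are nonnegative and sum to `1`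
  have hsplit : ∀ a, F a * G a =
      (F a ^ p * G a ^ q) ^ r⁻¹ * (F a ^ p) ^ (p⁻¹ - r⁻¹) * (G a ^ q) ^ (q⁻¹ - r⁻¹) := by
    intro a
    rw [ENNReal.mul_rpow_of_nonneg _ _ (inv_nonneg.2 hr.le), ← ENNReal.rpow_mul,
      ← ENNReal.rpow_mul, ← ENNReal.rpow_mul, ← ENNReal.rpow_mul,
      mul_right_comm _ (G a ^ _), mul_assoc,
      ← ENNReal.rpow_add_of_nonneg _ _ (by positivity) (by positivity),
      ← ENNReal.rpow_add_of_nonneg _ _ (by positivity) (mul_nonneg hq0.le hw),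
      ← mul_add, ← mul_add]
    simp [hp0.ne', hq0.ne']
  have hholder := ENNReal.lintegral_prod_norm_pow_le (μ := μ) Finset.univ
    (f := ![fun a => F a ^ p * G a ^ q, fun a => F a ^ p, fun a => G a ^ q])
    (p := ![r⁻¹, p⁻¹ - r⁻¹, q⁻¹ - r⁻¹])
    (by
      intro i _
      fin_cases i
      exacts [(hF.pow_const p).mul (hG.pow_const q), hF.pow_const p, hG.pow_const q])
    (by simp [Fin.sum_univ_three]; linarith)
    (by
      intro i _
      fin_cases i
      exacts [inv_nonneg.2 hr.le, hv, hw])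
  simp only [Fin.prod_univ_three, Matrix.cons_val_zero, Matrix.cons_val_one,
    Matrix.cons_val_two, Matrix.tail_cons, Matrix.head_cons] at hholder
  calc (∫⁻ a, F a * G a ∂μ) ^ r
      = (∫⁻ a, (F a ^ p * G a ^ q) ^ r⁻¹ * (F a ^ p) ^ (p⁻¹ - r⁻¹) *
          (G a ^ q) ^ (q⁻¹ - r⁻¹) ∂μ) ^ r := by rw [lintegral_congr hsplit]
    _ ≤ ((∫⁻ a, F a ^ p * G a ^ q ∂μ) ^ r⁻¹ * (∫⁻ a, F a ^ p ∂μ) ^ (p⁻¹ - r⁻¹) *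
          (∫⁻ a, G a ^ q ∂μ) ^ (q⁻¹ - r⁻¹)) ^ r := ENNReal.rpow_le_rpow hholder hr.le
    _ = _ := by
      rw [ENNReal.mul_rpow_of_nonneg _ _ hr.le, ENNReal.mul_rpow_of_nonneg _ _ hr.le,
        ← ENNReal.rpow_mul, ← ENNReal.rpow_mul, ← ENNReal.rpow_mul, inv_mul_cancel₀ hr.ne',
        ENNReal.rpow_one]
      congr 3 <;> field_simp

end

lemma ne_top_of_inv_add_inv_eq_one_add_inv {p q r : ℝ≥0∞} (hq : 1 ≤ q) (hr : r ≠ ∞)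
    (h : p⁻¹ + q⁻¹ = 1 + r⁻¹) : p ≠ ∞ := by
  rintro rfl
  rw [ENNReal.inv_top, zero_add] at h
  have : 1 + r⁻¹ ≤ 1 + 0 := by
    rw [← h, add_zero]
    exact ENNReal.inv_le_one.2 hq
  exact hr (ENNReal.inv_eq_zero.1
    (nonpos_iff_eq_zero.1 ((ENNReal.add_le_add_iff_left ENNReal.one_ne_top).1 this)))

section

variable {G : Type*} [MeasurableSpace G] [AddCommGroup G] [MeasurableAdd₂ G]
  {μ : Measure G} [μ.IsAddLeftInvariant] {F K : G → ℝ≥0∞}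

lemma AEMeasurable.comp_const_add (hK : AEMeasurable K μ) (x : G) :
    AEMeasurable (fun t => K (x + t)) μ :=
  hK.comp_quasiMeasurePreserving (measurePreserving_add_left μ x).quasiMeasurePreserving

lemma eLpNorm_comp_const_add (hK : AEMeasurable K μ) (x : G) (p : ℝ≥0∞) :
    eLpNorm (fun t => K (x + t)) p μ = eLpNorm K p μ :=
  eLpNorm_comp_measurePreserving hK.aestronglyMeasurable (measurePreserving_add_left μ x)

variable [SFinite μ]

lemma AEMeasurable.mul_comp_add_prod (hF : AEMeasurable F μ) (hK : AEMeasurable K μ) :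
    AEMeasurable (fun z : G × G => F z.2 * K (z.1 + z.2)) (μ.prod μ) :=
  (hF.comp_quasiMeasurePreserving Measure.quasiMeasurePreserving_snd).mul
    (hK.comp_quasiMeasurePreserving (quasiMeasurePreserving_add μ μ))

lemma lintegral_lintegral_mul_add (hF : AEMeasurable F μ) (hK : AEMeasurable K μ) :
    ∫⁻ x, ∫⁻ t, F t * K (x + t) ∂μ ∂μ = (∫⁻ t, F t ∂μ) * ∫⁻ t, K t ∂μ := by
  rw [lintegral_lintegral_swap (hF.mul_comp_add_prod hK)]
  have inner : ∀ t, ∫⁻ x, F t * K (x + t) ∂μ = F t * ∫⁻ t, K t ∂μ := fun t => by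
    simp_rw [add_comm _ t]
    rw [lintegral_const_mul'' _ (hK.comp_const_add t), lintegral_add_left_eq_self]
  rw [lintegral_congr inner, lintegral_mul_const'' _ hF]

lemma lintegral_lintegral_mul_add_rpow_le (hF : AEMeasurable F μ) (hK : AEMeasurable K μ)
    {p q r : ℝ} (hp : 1 ≤ p) (hq : 1 ≤ q) (hr : 0 < r) (hpqr : p⁻¹ + q⁻¹ = 1 + r⁻¹) :
    ∫⁻ x, (∫⁻ t, F t * K (x + t) ∂μ) ^ r ∂μ ≤
      (∫⁻ t, F t ^ p ∂μ) ^ (r / p) * (∫⁻ t, K t ^ q ∂μ) ^ (r / q) := by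
  set A := ∫⁻ t, F t ^ p ∂μ
  set B := ∫⁻ t, K t ^ q ∂μ
  have hrp : 0 ≤ r / p - 1 := by
    rw [show r / p - 1 = r * (p⁻¹ - r⁻¹) by field_simp]
    nlinarith [inv_le_one_of_one_le₀ hq]
  have hrq : 0 ≤ r / q - 1 := by
    rw [show r / q - 1 = r * (q⁻¹ - r⁻¹) by field_simp]
    nlinarith [inv_le_one_of_one_le₀ hp]
  have mul_rpow_sub_one : ∀ (X : ℝ≥0∞) {c : ℝ}, 0 ≤ c - 1 → X * X ^ (c - 1) = X ^ c := by
    intro X c hc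
    simpa using (ENNReal.rpow_add_of_nonneg (x := X) 1 (c - 1) zero_le_one hc).symm
  calc ∫⁻ x, (∫⁻ t, F t * K (x + t) ∂μ) ^ r ∂μ
      ≤ ∫⁻ x, (∫⁻ t, F t ^ p * K (x + t) ^ q ∂μ) * A ^ (r / p - 1) * B ^ (r / q - 1) ∂μ := by
        refine lintegral_mono fun x => ?_
        have h := lintegral_mul_rpow_le hF (hK.comp_const_add x) hp hq hr hpqr
        rwa [lintegral_add_left_eq_self (fun t => K t ^ q) x] at h
    _ = A * B * A ^ (r / p - 1) * B ^ (r / q - 1) := by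
        have hmeas := ((hF.pow_const p).mul_comp_add_prod (hK.pow_const q)).lintegral_prod_right'
        rw [lintegral_mul_const'' _ (hmeas.mul_const _), lintegral_mul_const'' _ hmeas,
          lintegral_lintegral_mul_add (hF.pow_const p) (hK.pow_const q)]
    _ = A ^ (r / p) * B ^ (r / q) := by
        rw [mul_right_comm A, mul_assoc (A * _), mul_rpow_sub_one A hrp, mul_rpow_sub_one B hrq]

lemma eLpNorm_lintegral_mul_add_le (hF : AEMeasurable F μ) (hK : AEMeasurable K μ)
    {p q r : ℝ≥0∞} (hp : 1 ≤ p) (hq : 1 ≤ q) (hpqr : p⁻¹ + q⁻¹ = 1 + r⁻¹) :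
    eLpNorm (fun x => ∫⁻ t, F t * K (x + t) ∂μ) r μ ≤ eLpNorm F p μ * eLpNorm K q μ := by
  rcases eq_or_ne r ∞ with rfl | hr
  · have : p.HolderConjugate q := ⟨by simpa using hpqr⟩
    rw [eLpNorm_exponent_top, eLpNormEssSup_eq_essSup_enorm]
    refine essSup_le_of_ae_le _ (.of_forall fun x => ?_)
    simp only [enorm_eq_self]
    rw [← eLpNorm_comp_const_add hK x q]
    exact lintegral_mul_le_eLpNorm_mul_eLpNorm hF (hK.comp_const_add x)
  have hp_top := ne_top_of_inv_add_inv_eq_one_add_inv hq hr hpqr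
  have hq_top := ne_top_of_inv_add_inv_eq_one_add_inv hp hr (by rwa [add_comm])
  have hp0 : p ≠ 0 := (zero_lt_one.trans_le hp).ne'
  have hq0 : q ≠ 0 := (zero_lt_one.trans_le hq).ne'
  have hr0 : r ≠ 0 := by
    rintro rfl
    simp [ENNReal.add_eq_top, hp0, hq0] at hpqr
  have hP : 1 ≤ p.toReal := ENNReal.toReal_one ▸ ENNReal.toReal_mono hp_top hp
  have hQ : 1 ≤ q.toReal := ENNReal.toReal_one ▸ ENNReal.toReal_mono hq_top hq
  have hR : 0 < r.toReal := ENNReal.toReal_pos hr0 hr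
  have hpqr' : p.toReal⁻¹ + q.toReal⁻¹ = 1 + r.toReal⁻¹ := by
    simpa [ENNReal.toReal_add, hp0, hq0, hr0] using congrArg ENNReal.toReal hpqr
  simp only [eLpNorm_eq_lintegral_rpow_enorm_toReal hp0 hp_top,
    eLpNorm_eq_lintegral_rpow_enorm_toReal hq0 hq_top,
    eLpNorm_eq_lintegral_rpow_enorm_toReal hr0 hr, enorm_eq_self]
  calc (∫⁻ x, (∫⁻ t, F t * K (x + t) ∂μ) ^ r.toReal ∂μ) ^ (1 / r.toReal)
      ≤ ((∫⁻ t, F t ^ p.toReal ∂μ) ^ (r.toReal / p.toReal) *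
          (∫⁻ t, K t ^ q.toReal ∂μ) ^ (r.toReal / q.toReal)) ^ (1 / r.toReal) :=
        ENNReal.rpow_le_rpow (lintegral_lintegral_mul_add_rpow_le hF hK hP hQ hR hpqr')
          (by positivity)
    _ = _ := by
        rw [ENNReal.mul_rpow_of_nonneg _ _ (by positivity), ← ENNReal.rpow_mul,
          ← ENNReal.rpow_mul]
        congr 2 <;> field_simp

lemma eLpNorm_eLpNorm_mul_add_le_of_ne_top (hF : AEMeasurable F μ) (hK : AEMeasurable K μ)
    {s q p r : ℝ≥0∞} (hs : 1 ≤ s) (hs_top : s ≠ ∞) (hsq : s ≤ q) (hsp : s ≤ p)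
    (h : q⁻¹ + p⁻¹ = s⁻¹ + r⁻¹) :
    eLpNorm (fun x => eLpNorm (fun t => F t * K (x + t)) s μ) r μ ≤
      eLpNorm F q μ * eLpNorm K p μ := by
  have hs0 : s ≠ 0 := (zero_lt_one.trans_le hs).ne'
  set S := s.toReal
  have hS : 0 < S := ENNReal.toReal_pos hs0 hs_top
  have hsS : ENNReal.ofReal S = s := ENNReal.ofReal_toReal hs_top
  have hscale : ∀ (Φ : G → ℝ≥0∞) (e : ℝ≥0∞),
      eLpNorm (fun a => Φ a ^ S) (e / s) μ = eLpNorm Φ e μ ^ S := by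
    intro Φ e
    rw [eLpNorm_rpow Φ hS, hsS, ENNReal.div_mul_cancel hs0 hs_top]
  have hone : ∀ e, s ≤ e → 1 ≤ e / s := fun e he => by
    rwa [ENNReal.le_div_iff_mul_le (.inl hs0) (.inl hs_top), one_mul]
  have hrel : (q / s)⁻¹ + (p / s)⁻¹ = 1 + (r / s)⁻¹ := by
    rw [ENNReal.inv_div (.inl hs_top) (.inl hs0), ENNReal.inv_div (.inl hs_top) (.inl hs0),
      ENNReal.inv_div (.inl hs_top) (.inl hs0)]
    simp only [div_eq_mul_inv]
    rw [← mul_add, h, mul_add, ENNReal.mul_inv_cancel hs0 hs_top]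
  simp_rw [eLpNorm_mul_eq_lintegral hs0 hs_top]
  calc eLpNorm (fun x => (∫⁻ t, F t ^ S * K (x + t) ^ S ∂μ) ^ S⁻¹) r μ
      = eLpNorm (fun x => ∫⁻ t, F t ^ S * K (x + t) ^ S ∂μ) (r / s) μ ^ S⁻¹ := by
        rw [eLpNorm_rpow _ (inv_pos.2 hS), ENNReal.ofReal_inv_of_pos hS, hsS, div_eq_mul_inv]
    _ ≤ (eLpNorm (fun t => F t ^ S) (q / s) μ * eLpNorm (fun t => K t ^ S) (p / s) μ) ^ S⁻¹ :=
        ENNReal.rpow_le_rpow (eLpNorm_lintegral_mul_add_le (hF.pow_const S) (hK.pow_const S)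
          (hone q hsq) (hone p hsp) hrel) (inv_nonneg.2 hS.le)
    _ = eLpNorm F q μ * eLpNorm K p μ := by
        rw [hscale, hscale, ← ENNReal.mul_rpow_of_nonneg _ _ hS.le, ENNReal.rpow_rpow_inv hS.ne']

lemma aemeasurable_eLpNorm_mul_add (hF : AEMeasurable F μ) (hK : AEMeasurable K μ)
    {s : ℝ≥0∞} (hs_top : s ≠ ∞) :
    AEMeasurable (fun x => eLpNorm (fun t => F t * K (x + t)) s μ) μ := by
  rcases eq_or_ne s 0 with rfl | hs0
  · simp only [eLpNorm_exponent_zero]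
    exact aemeasurable_const
  simp_rw [eLpNorm_mul_eq_lintegral hs0 hs_top]
  exact ((hF.pow_const _).mul_comp_add_prod (hK.pow_const _)).lintegral_prod_right'.pow_const _

lemma exists_aemeasurable_ge_eLpNorm_mul_add (hF : AEMeasurable F μ) (hK : AEMeasurable K μ)
    {s q p r : ℝ≥0∞} (hs : 1 ≤ s) (hsq : s ≤ q) (hsp : s ≤ p) (h : q⁻¹ + p⁻¹ = s⁻¹ + r⁻¹) :
    ∃ H : G → ℝ≥0∞, AEMeasurable H μ ∧ (∀ x, eLpNorm (fun t => F t * K (x + t)) s μ ≤ H x) ∧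
      eLpNorm H r μ ≤ eLpNorm F q μ * eLpNorm K p μ := by
  rcases ne_or_eq s ∞ with hs_top | rfl
  · exact ⟨_, aemeasurable_eLpNorm_mul_add hF hK hs_top, fun _ => le_rfl,
      eLpNorm_eLpNorm_mul_add_le_of_ne_top hF hK hs hs_top hsq hsp h⟩
  -- for `s = ∞` the inner norm need not be measurable in `x`, but it is bounded by a constant
  obtain rfl : q = ∞ := top_le_iff.1 hsq
  obtain rfl : p = ∞ := top_le_iff.1 hsp
  obtain rfl : r = ∞ := by simpa [eq_comm] using h
  refine ⟨fun _ => eLpNorm F ∞ μ * eLpNorm K ∞ μ, aemeasurable_const, fun x => ?_, ?_⟩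
  · rw [← eLpNorm_comp_const_add hK x]
    simp only [eLpNorm_exponent_top, eLpNormEssSup_eq_essSup_enorm, enorm_eq_self]
    exact ENNReal.essSup_mul_le _ _
  · rw [eLpNorm_exponent_top, eLpNormEssSup_eq_essSup_enorm]
    exact essSup_le_of_ae_le _ (.of_forall fun _ => le_rfl)

lemma eLpNorm_eLpNorm_mul_add_le (hF : AEMeasurable F μ) (hK : AEMeasurable K μ)
    {s q p r : ℝ≥0∞} (hs : 1 ≤ s) (hsq : s ≤ q) (hsp : s ≤ p) (h : q⁻¹ + p⁻¹ = s⁻¹ + r⁻¹) :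
    eLpNorm (fun x => eLpNorm (fun t => F t * K (x + t)) s μ) r μ ≤
      eLpNorm F q μ * eLpNorm K p μ := by
  obtain ⟨H, -, hH, hH_le⟩ := exists_aemeasurable_ge_eLpNorm_mul_add hF hK hs hsq hsp h
  exact (eLpNorm_mono_enorm hH).trans hH_le

end

lemma exists_intermediate_exponent {q₁ q₂ q₃ s₁ s₂ s₃ : ℝ≥0∞} (hq₃ : q₃ ≠ 0) (hs₁ : s₁ ≠ 0)
    (hs₂ : s₂ ≠ 0) (hs₃ : s₃ ≠ 0) (h11 : s₁ ≤ q₁) (h22 : s₂ ≤ q₂)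
    (hB2a : (1 / s₃).toReal - (1 / q₁).toReal ≤ (1 / q₂).toReal - (1 / s₂).toReal)
    (hB2b : (1 / s₃).toReal - (1 / q₂).toReal ≤ 0)
    (hB3 : ((1 / q₁).toReal - (1 / s₁).toReal) + ((1 / q₂).toReal - (1 / s₂).toReal)
        = (1 / s₃).toReal - (1 / q₃).toReal) :
    ∃ r, s₂ ≤ r ∧ s₁ ≤ q₃ ∧ q₂⁻¹ + r⁻¹ = s₂⁻¹ + s₃⁻¹ ∧ q₁⁻¹ + q₃⁻¹ = s₁⁻¹ + r⁻¹ := by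
  simp only [one_div] at hB2a hB2b hB3
  have hq₁ : q₁ ≠ 0 := ((pos_iff_ne_zero.2 hs₁).trans_le h11).ne'
  have hq₂ : q₂ ≠ 0 := ((pos_iff_ne_zero.2 hs₂).trans_le h22).ne'
  have hinv : ∀ {e : ℝ≥0∞}, e ≠ 0 → e⁻¹ = ENNReal.ofReal e⁻¹.toReal := fun he =>
    (ENNReal.ofReal_toReal (ENNReal.inv_ne_top.2 he)).symm
  have h₂ : q₂⁻¹.toReal ≤ s₂⁻¹.toReal :=
    ENNReal.toReal_mono (ENNReal.inv_ne_top.2 hs₂) (ENNReal.inv_le_inv.2 h22)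
  have h₃ : 0 ≤ s₃⁻¹.toReal := ENNReal.toReal_nonneg
  set ρ := s₂⁻¹.toReal + s₃⁻¹.toReal - q₂⁻¹.toReal
  refine ⟨(ENNReal.ofReal ρ)⁻¹, ?_, ?_, ?_, ?_⟩
  · rw [ENNReal.le_inv_iff_le_inv, hinv hs₂]
    exact ENNReal.ofReal_le_ofReal (by linarith)
  · rw [← ENNReal.inv_le_inv, hinv hq₃, hinv hs₁]
    exact ENNReal.ofReal_le_ofReal (by linarith)
  · rw [inv_inv, hinv hq₂, hinv hs₂, hinv hs₃, ← ENNReal.ofReal_add ENNReal.toReal_nonneg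
      (by linarith), ← ENNReal.ofReal_add ENNReal.toReal_nonneg h₃]
    congr 1
    ring
  · rw [inv_inv, hinv hq₁, hinv hq₃, hinv hs₁, ← ENNReal.ofReal_add ENNReal.toReal_nonneg
      ENNReal.toReal_nonneg, ← ENNReal.ofReal_add ENNReal.toReal_nonneg (by linarith)]
    congr 1
    linarith

theorem stmt7_general (d : ℕ) (q₁ q₂ q₃ s₁ s₂ s₃ : ℝ≥0∞)
    (hq₃ : 1 ≤ q₃)
    (hs₁ : 1 ≤ s₁) (hs₂ : 1 ≤ s₂) (hs₃ : 1 ≤ s₃)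
    (h11 : s₁ ≤ q₁) (h22 : s₂ ≤ q₂)
    (hB2a : (1 / s₃).toReal - (1 / q₁).toReal ≤ (1 / q₂).toReal - (1 / s₂).toReal)
    (hB2b : (1 / s₃).toReal - (1 / q₂).toReal ≤ 0)
    (hB3 : ((1 / q₁).toReal - (1 / s₁).toReal) + ((1 / q₂).toReal - (1 / s₂).toReal)
        = (1 / s₃).toReal - (1 / q₃).toReal)
    (f₁ f₂ g : Ed d → ℂ)
    (hf₁ : MemLp f₁ q₁ volume) (hf₂ : MemLp f₂ q₂ volume) (hg : MemLp g q₃ volume) :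
    eNorm volume s₃ (fun x => eNorm volume s₂ (fun t₂ => eNorm volume s₁ (fun t₁ =>
        (‖f₁ t₁ * f₂ t₂ * g (x + t₁ + t₂)‖₊ : ℝ≥0∞))))
      ≤ eLpNorm f₁ q₁ volume * eLpNorm f₂ q₂ volume * eLpNorm g q₃ volume := by
  have ne_zero : ∀ {e : ℝ≥0∞}, 1 ≤ e → e ≠ 0 := fun he => (zero_lt_one.trans_le he).ne'
  obtain ⟨r, hs₂r, hs₁q₃, hr₂, hr₁⟩ := exists_intermediate_exponent (ne_zero hq₃) (ne_zero hs₁)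
    (ne_zero hs₂) (ne_zero hs₃) h11 h22 hB2a hB2b hB3
  obtain ⟨H, hH, hH_ge, hH_le⟩ :=
    exists_aemeasurable_ge_eLpNorm_mul_add hf₁.1.enorm hg.1.enorm hs₁ h11 hs₁q₃ hr₁
  simp only [← enorm_eq_nnnorm, eNorm_eq_eLpNorm (ne_zero hs₁), eNorm_eq_eLpNorm (ne_zero hs₂),
    eNorm_eq_eLpNorm (ne_zero hs₃)]
  calc eLpNorm (fun x => eLpNorm (fun t₂ => eLpNorm (fun t₁ =>
          ‖f₁ t₁ * f₂ t₂ * g (x + t₁ + t₂)‖ₑ) s₁ volume) s₂ volume) s₃ volume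
      = eLpNorm (fun x => eLpNorm (fun t₂ => ‖f₂ t₂‖ₑ * eLpNorm (fun t₁ =>
          ‖f₁ t₁‖ₑ * ‖g (x + t₂ + t₁)‖ₑ) s₁ volume) s₂ volume) s₃ volume := by
        simp_rw [add_right_comm _ _ (_ : Ed d), eLpNorm_enorm_mul_const_mul]
    _ ≤ eLpNorm (fun x => eLpNorm (fun t₂ => ‖f₂ t₂‖ₑ * H (x + t₂)) s₂ volume) s₃ volume :=
        eLpNorm_mono_enorm fun x => eLpNorm_mono_enorm fun t₂ => mul_le_mul_right (hH_ge _) _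
    _ ≤ eLpNorm (‖f₂ ·‖ₑ) q₂ volume * eLpNorm H r volume :=
        eLpNorm_eLpNorm_mul_add_le hf₂.1.enorm hH hs₂ h22 hs₂r hr₂
    _ ≤ eLpNorm (‖f₂ ·‖ₑ) q₂ volume * (eLpNorm (‖f₁ ·‖ₑ) q₁ volume * eLpNorm (‖g ·‖ₑ) q₃ volume) :=
        mul_le_mul_right hH_le _
    _ = eLpNorm f₁ q₁ volume * eLpNorm f₂ q₂ volume * eLpNorm g q₃ volume := by
        simp only [eLpNorm_enorm]
        ring

/-- the case `m = 2` of the Young-type inequality of Lemma `lemma:Young2`. -/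
theorem stmt7 (d : ℕ) (hd : 1 ≤ d) (q₁ q₂ q₃ s₁ s₂ s₃ : ℝ≥0∞)
    (hq₁ : 1 ≤ q₁) (hq₂ : 1 ≤ q₂) (hq₃ : 1 ≤ q₃)
    (hs₁ : 1 ≤ s₁) (hs₂ : 1 ≤ s₂) (hs₃ : 1 ≤ s₃)
    (h11 : s₁ ≤ q₁) (h22 : s₂ ≤ q₂)
    (hB2a : (1 / s₃).toReal - (1 / q₁).toReal ≤ (1 / q₂).toReal - (1 / s₂).toReal)
    (hB2b : (1 / s₃).toReal - (1 / q₂).toReal ≤ 0)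
    (hB3 : ((1 / q₁).toReal - (1 / s₁).toReal) + ((1 / q₂).toReal - (1 / s₂).toReal)
        = (1 / s₃).toReal - (1 / q₃).toReal)
    (f₁ f₂ g : Ed d → ℂ)
    (hf₁ : MemLp f₁ q₁ volume) (hf₂ : MemLp f₂ q₂ volume) (hg : MemLp g q₃ volume) :
    eNorm volume s₃ (fun x => eNorm volume s₂ (fun t₂ => eNorm volume s₁ (fun t₁ =>
        (‖f₁ t₁ * f₂ t₂ * g (x + t₁ + t₂)‖₊ : ℝ≥0∞))))
      ≤ eLpNorm f₁ q₁ volume * eLpNorm f₂ q₂ volume * eLpNorm g q₃ volume :=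
  stmt7_general d q₁ q₂ q₃ s₁ s₂ s₃ hq₃ hs₁ hs₂ hs₃ h11 h22 hB2a hB2b hB3 f₁ f₂ g hf₁ hf₂ hg
end
end
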